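/- arXiv:2001.06271 — 4 statements merged into one kernel-verified Lean document; each statement's English description precedes it below -/
import Mathlib

section
/- Let v be a finite set of n ≥ 1 processes and B ⊆ v with |B| ≤ ⌊(n-1)/3⌋, q = n - ⌊(n-1)/3⌋. If Q₁ and Q₂ are quorums of v such that every correct (non-Byzantine) process in Q₁ acknowledged message m and every correct process in Q₂ acknowledged message m', and no correct process acknowledges two different messages, then m = m'. -/
/-- If every correct process of quorum `Q₁` acknowledged `m` and every correct
process of quorum `Q₂` acknowledged `m'`, where a correct process acknowledges
at most one message (modeled by the function `ack`), then `m = m'`. -/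
theorem quorum_ack_agreement {α M : Type*} [DecidableEq α]
    (v : Finset α) (n : ℕ) (hn : v.card = n) (h1 : 1 ≤ n)
    (B : Finset α) (hB : B ⊆ v) (hBcard : B.card ≤ (n - 1) / 3)
    (Q₁ Q₂ : Finset α) (hQ₁ : Q₁ ⊆ v) (hQ₂ : Q₂ ⊆ v)
    (hc₁ : n - (n - 1) / 3 ≤ Q₁.card) (hc₂ : n - (n - 1) / 3 ≤ Q₂.card)
    (ack : α → Option M) (m m' : M)
    (hack₁ : ∀ p ∈ Q₁, p ∉ B → ack p = some m)
    (hack₂ : ∀ p ∈ Q₂, p ∉ B → ack p = some m') :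
    m = m' := by
  have hunion : (Q₁ ∪ Q₂).card ≤ n := hn ▸ Finset.card_le_card (Finset.union_subset hQ₁ hQ₂)
  have hkey : (Q₁ ∪ Q₂).card + (Q₁ ∩ Q₂).card = Q₁.card + Q₂.card :=
    Finset.card_union_add_card_inter _ _
  have hf : 3 * ((n - 1) / 3) ≤ n - 1 := by omega
  have hlt : B.card < (Q₁ ∩ Q₂).card := by omega
  have hne : ((Q₁ ∩ Q₂) \ B).Nonempty := by
    rw [Finset.sdiff_nonempty]
    intro hsub
    exact absurd (Finset.card_le_card hsub) (not_le.mpr hlt)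
  obtain ⟨p, hp'⟩ := hne
  obtain ⟨hp1, hp2⟩ := Finset.mem_sdiff.mp hp'
  have hp : p ∈ Q₁ ∩ Q₂ ∧ p ∉ B := ⟨hp1, hp2⟩
  have h1 := hack₁ p (Finset.mem_inter.mp hp.1).1 hp.2
  have h2 := hack₂ p (Finset.mem_inter.mp hp.1).2 hp.2
  rw [h1] at h2
  exact Option.some.inj h2
end

section
/- Let I be a set of views (the installable views) containing a distinguished initial view v₀, such that every v ∈ I with v ≠ v₀ has exactly one predecessor pred(v) ∈ I with pred(v) ⊊ v, each view in I leads to at most one view, and from each view the chain of predecessors reaches v₀ in finitely many steps. Then I is totally ordered by strict inclusion, i.e., I forms a sequence of views. -/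
/-- Let `I` be the set of installable views, containing the initial view `v₀`.
If every non-initial view of `I` has exactly one predecessor in `I` strictly
contained in it, each view leads to at most one view (the predecessor map is
injective on non-initial views), and every predecessor chain reaches `v₀` in
finitely many steps, then `I` is totally ordered by strict inclusion, i.e.,
the installable views form a sequence of views. -/
theorem installable_views_form_sequence {C : Type*}
    (I : Set (Set C)) (v₀ : Set C) (hv₀ : v₀ ∈ I)
    (pred : Set C → Set C)
    (hpred : ∀ v ∈ I, v ≠ v₀ → pred v ∈ I ∧ pred v ⊂ v)
    (huniq : ∀ v' ∈ I, ∀ v'' ∈ I, v' ≠ v₀ → v'' ≠ v₀ →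
      pred v' = pred v'' → v' = v'')
    (hreach : ∀ v ∈ I, ∃ k : ℕ, pred^[k] v = v₀) :
    ∀ v₁ ∈ I, ∀ v₂ ∈ I, v₁ ≠ v₂ → v₁ ⊂ v₂ ∨ v₂ ⊂ v₁ := by
  -- membership of iterates, as long as we haven't hit v₀
  have hmem : ∀ v ∈ I, ∀ i : ℕ, (∀ j < i, pred^[j] v ≠ v₀) → pred^[i] v ∈ I := by
    intro v hv i
    induction i with
    | zero => intro _; simpa using hv
    | succ i ih =>
      intro h
      rw [Function.iterate_succ_apply']
      exact (hpred _ (ih fun j hj => h j (Nat.lt_succ_of_lt hj))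
        (h i (Nat.lt_succ_self i))).1
  -- strict descent of iterates
  have hchain : ∀ v ∈ I, ∀ i : ℕ, (∀ j < i, pred^[j] v ≠ v₀) → i ≠ 0 →
      pred^[i] v ⊂ v := by
    intro v hv i
    induction i with
    | zero => intro _ h; exact absurd rfl h
    | succ i ih =>
      intro h _
      have hmi : pred^[i] v ∈ I := hmem v hv i fun j hj => h j (Nat.lt_succ_of_lt hj)
      have hstep : pred^[i+1] v ⊂ pred^[i] v := by
        rw [Function.iterate_succ_apply']
        exact (hpred _ hmi (h i (Nat.lt_succ_self i))).2
      rcases Nat.eq_zero_or_pos i with hi | hi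
      · subst hi; simpa using hstep
      · exact hstep.trans (ih (fun j hj => h j (Nat.lt_succ_of_lt hj)) hi.ne')
  -- views with the same exact reach coincide
  have hexact : ∀ m : ℕ, ∀ a ∈ I, ∀ b ∈ I,
      pred^[m] a = v₀ → (∀ i < m, pred^[i] a ≠ v₀) →
      pred^[m] b = v₀ → (∀ i < m, pred^[i] b ≠ v₀) → a = b := by
    intro m
    induction m with
    | zero => intro a _ b _ ha _ hb _; simpa using ha.trans hb.symm
    | succ m ih =>
      intro a haI b hbI ha ha' hb hb'
      have hane : a ≠ v₀ := by simpa using ha' 0 (Nat.succ_pos m)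
      have hbne : b ≠ v₀ := by simpa using hb' 0 (Nat.succ_pos m)
      have hpa : pred a ∈ I := (hpred a haI hane).1
      have hpb : pred b ∈ I := (hpred b hbI hbne).1
      have key : pred a = pred b := by
        apply ih (pred a) hpa (pred b) hpb
        · rw [← Function.iterate_succ_apply]; exact ha
        · intro i hi
          rw [← Function.iterate_succ_apply]
          exact ha' (i + 1) (Nat.succ_lt_succ hi)
        · rw [← Function.iterate_succ_apply]; exact hb
        · intro i hi
          rw [← Function.iterate_succ_apply]
          exact hb' (i + 1) (Nat.succ_lt_succ hi)
      exact huniq a haI b hbI hane hbne key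
  -- the main comparison: if the exact reach of v is ≤ that of w, v ⊆ w
  have main : ∀ v ∈ I, ∀ w ∈ I, v ≠ w → ∀ n m : ℕ,
      pred^[n] v = v₀ → (∀ i < n, pred^[i] v ≠ v₀) →
      pred^[m] w = v₀ → (∀ i < m, pred^[i] w ≠ v₀) →
      n ≤ m → v ⊂ w := by
    intro v hvI w hwI hne n m hn hn' hm hm' hnm
    set d := m - n with hd
    have hdm : n + d = m := by omega
    have hmemd : pred^[d] w ∈ I := hmem w hwI d fun j hj => hm' j (by omega)
    have heq : v = pred^[d] w := by
      apply hexact n v hvI (pred^[d] w) hmemd hn hn'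
      · rw [← Function.iterate_add_apply, hdm]; exact hm
      · intro i hi
        rw [← Function.iterate_add_apply]
        exact hm' (i + d) (by omega)
    have hd0 : d ≠ 0 := by
      intro h0
      have : n = m := by omega
      subst this
      exact hne (heq.trans (by rw [h0]; simp))
    rw [heq]
    exact hchain w hwI d (fun j hj => hm' j (by omega)) hd0
  intro v₁ h₁ v₂ h₂ hne
  obtain ⟨k₁, hk₁⟩ := hreach v₁ h₁
  obtain ⟨k₂, hk₂⟩ := hreach v₂ h₂
  classical
  have e₁ : ∃ k, pred^[k] v₁ = v₀ := ⟨k₁, hk₁⟩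
  have e₂ : ∃ k, pred^[k] v₂ = v₀ := ⟨k₂, hk₂⟩
  set n₁ := Nat.find e₁ with hn₁def
  set n₂ := Nat.find e₂ with hn₂def
  have hn₁ : pred^[n₁] v₁ = v₀ := Nat.find_spec e₁
  have hn₂ : pred^[n₂] v₂ = v₀ := Nat.find_spec e₂
  have hn₁' : ∀ i < n₁, pred^[i] v₁ ≠ v₀ := fun i hi => Nat.find_min e₁ hi
  have hn₂' : ∀ i < n₂, pred^[i] v₂ ≠ v₀ := fun i hi => Nat.find_min e₂ hi
  rcases le_total n₁ n₂ with h | h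
  · exact Or.inl (main v₁ h₁ v₂ h₂ hne n₁ n₂ hn₁ hn₁' hn₂ hn₂' h)
  · exact Or.inr (main v₂ h₂ v₁ h₁ hne.symm n₂ n₁ hn₂ hn₂' hn₁ hn₁' h)
end

section
/- In any total order, if an element v leads to both v' and v'' where 'leads to' means v' and v'' are each the unique maximum of some sequence converged on to replace v, and any two sequences converged on to replace v are comparable by inclusion with all intermediate elements of the larger sequence non-installable while v' and v'' are installable, then v' = v''. Concretely: let seq' and seq'' be finite chains of views with maxima v' and v'' respectively, with seq' ⊆ seq'' or seq'' ⊆ seq', such that v' ∈ seq'' implies v' = v'' whenever all elements of seq'' strictly above elements of seq' other than the maximum are non-installable and v', v'' are installable. Prove v' = v''. -/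
/-- A view leads to at most one view: if `seq'` and `seq''` are chains of
views converged on to replace the same view, with respective (unique) maxima
`v'` and `v''`, the two chains are comparable by inclusion, all non-maximal
elements of each chain are non-installable, and `v'`, `v''` are installable,
then `v' = v''`. -/
theorem leads_to_unique {C : Type*}
    (installable : Set C → Prop)
    (seq' seq'' : Set (Set C))
    (hchain' : ∀ w₁ ∈ seq', ∀ w₂ ∈ seq', w₁ ≠ w₂ → w₁ ⊂ w₂ ∨ w₂ ⊂ w₁)
    (hchain'' : ∀ w₁ ∈ seq'', ∀ w₂ ∈ seq'', w₁ ≠ w₂ → w₁ ⊂ w₂ ∨ w₂ ⊂ w₁)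
    (v' v'' : Set C)
    (hmax' : v' ∈ seq' ∧ ∀ w ∈ seq', w ⊆ v')
    (hmax'' : v'' ∈ seq'' ∧ ∀ w ∈ seq'', w ⊆ v'')
    (hcomp : seq' ⊆ seq'' ∨ seq'' ⊆ seq')
    (hni' : ∀ w ∈ seq', w ≠ v' → ¬ installable w)
    (hni'' : ∀ w ∈ seq'', w ≠ v'' → ¬ installable w)
    (hi' : installable v') (hi'' : installable v'') :
    v' = v'' := by
  rcases hcomp with h | h
  · by_contra hne
    exact hni'' v' (h hmax'.1) hne hi'
  · by_contra hne
    exact hni' v'' (h hmax''.1) (fun e => hne e.symm) hi''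
end

section
/- Let s be a finite set of views such that (a) the installable views in s form a chain under strict inclusion, (b) every non-installable view in s is an auxiliary view for exactly one installable view v' ∈ s and strictly contains v', and (c) if a non-installable view v is auxiliary for installable v' and v' leads to installable v'', then v ⊊ v''. Assume additionally that any two non-installable views auxiliary to the same installable view are comparable. Then any two distinct views in s are comparable: v₁ ⊊ v₂ or v₂ ⊊ v₁. -/
/-- In a state `s` where (a) installable views form a chain, (b) every
non-installable view of `s` is auxiliary for exactly one installable view of
`s`, which it strictly contains, (c) an auxiliary view of `v'` is strictly
contained in any installable view `v''` that `v'` leads to, any two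
auxiliaries of the same view are comparable, and every pair of installable
views `v' ⊊ v₂` is connected by a `leadsTo` step into `v₂`: then any two
distinct views in `s` are comparable. -/
theorem state_views_comparable {C : Type*}
    (s : Set (Set C))
    (installable : Set C → Prop)
    (aux : Set C → Set C → Prop)       -- `aux v v'`: v is an auxiliary view for v'
    (leadsTo : Set C → Set C → Prop)
    (hchain : ∀ v₁ ∈ s, ∀ v₂ ∈ s, installable v₁ → installable v₂ →
      v₁ ≠ v₂ → v₁ ⊂ v₂ ∨ v₂ ⊂ v₁)
    (hauxUniq : ∀ v ∈ s, ¬ installable v →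
      ∃! v', v' ∈ s ∧ installable v' ∧ aux v v')
    (hauxSup : ∀ v v', aux v v' → v' ⊂ v)
    (hauxLt : ∀ v v' v'', aux v v' → leadsTo v' v'' → installable v'' → v ⊂ v'')
    (hauxComp : ∀ v₁ v₂ v', aux v₁ v' → aux v₂ v' → v₁ ≠ v₂ →
      v₁ ⊂ v₂ ∨ v₂ ⊂ v₁)
    (hnext : ∀ v' v₂, installable v' → installable v₂ → v' ⊂ v₂ →
      ∃ v'', leadsTo v' v'' ∧ installable v'' ∧ v'' ⊆ v₂) :
    ∀ v₁ ∈ s, ∀ v₂ ∈ s, v₁ ≠ v₂ → v₁ ⊂ v₂ ∨ v₂ ⊂ v₁ := by 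
  intro v₁ h₁ v₂ h₂ hne
  -- key: if aux v w, installable u, w ⊂ u, then v ⊂ u
  have key : ∀ v w u, aux v w → installable w → installable u → w ⊂ u → v ⊂ u := by
    intro v w u ha hw hu hlt
    obtain ⟨v'', hl, hi, hsub⟩ := hnext w u hw hu hlt
    exact lt_of_lt_of_le (hauxLt v w v'' ha hl hi) hsub
  by_cases i₁ : installable v₁ <;> by_cases i₂ : installable v₂
  · exact hchain v₁ h₁ v₂ h₂ i₁ i₂ hne
  · obtain ⟨w₂, ⟨hw₂s, hw₂i, hw₂a⟩, -⟩ := hauxUniq v₂ h₂ i₂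
    by_cases he : w₂ = v₁
    · exact Or.inl (he ▸ hauxSup v₂ w₂ hw₂a)
    · rcases hchain w₂ hw₂s v₁ h₁ hw₂i i₁ he with h | h
      · exact Or.inr (key v₂ w₂ v₁ hw₂a hw₂i i₁ h)
      · exact Or.inl (lt_trans h (hauxSup v₂ w₂ hw₂a))
  · obtain ⟨w₁, ⟨hw₁s, hw₁i, hw₁a⟩, -⟩ := hauxUniq v₁ h₁ i₁
    by_cases he : w₁ = v₂
    · exact Or.inr (he ▸ hauxSup v₁ w₁ hw₁a)
    · rcases hchain w₁ hw₁s v₂ h₂ hw₁i i₂ he with h | h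
      · exact Or.inl (key v₁ w₁ v₂ hw₁a hw₁i i₂ h)
      · exact Or.inr (lt_trans h (hauxSup v₁ w₁ hw₁a))
  · obtain ⟨w₁, ⟨hw₁s, hw₁i, hw₁a⟩, -⟩ := hauxUniq v₁ h₁ i₁
    obtain ⟨w₂, ⟨hw₂s, hw₂i, hw₂a⟩, -⟩ := hauxUniq v₂ h₂ i₂
    by_cases he : w₁ = w₂
    · exact hauxComp v₁ v₂ w₁ hw₁a (he ▸ hw₂a) hne
    · rcases hchain w₁ hw₁s w₂ hw₂s hw₁i hw₂i he with h | h
      · exact Or.inl (lt_trans (key v₁ w₁ w₂ hw₁a hw₁i hw₂i h) (hauxSup v₂ w₂ hw₂a))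
      · exact Or.inr (lt_trans (key v₂ w₂ w₁ hw₂a hw₂i hw₁i h) (hauxSup v₁ w₁ hw₁a))
end
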